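/- Let S, T ∈ Bⁿ(T₀) and let s ∈ B(S), t ∈ B(T) be children of S and T respectively. If s and t are adjacent (share a common side) as triangles of B^{n+1}(T₀), then either S = T or S and T are adjacent. -/
import Mathlib


/-- A point of the plane. -/
abbrev Pt := ℝ × ℝ

/-- A triangle in the plane: an ordered triple of points. -/
structure Triangle where
  v : Fin 3 → Pt

/-- A triangle is nondegenerate if its vertices are affinely independent. -/
def Triangle.Nondeg (T : Triangle) : Prop := AffineIndependent ℝ T.v

/-- The barycenter of a triangle. -/
noncomputable def Triangle.bary (T : Triangle) : Pt :=
  (3 : ℝ)⁻¹ • (T.v 0 + T.v 1 + T.v 2)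

/-- The child `[aᵢ, (aᵢ+aⱼ)/2, b]` of a triangle produced by barycentric subdivision. -/
noncomputable def Triangle.child (T : Triangle) (i j : Fin 3) : Triangle :=
  ⟨![T.v i, (2 : ℝ)⁻¹ • (T.v i + T.v j), T.bary]⟩

/-- The barycentric subdivision of a triangle: the set of its six children. -/
noncomputable def BSub (T : Triangle) : Set Triangle :=
  {t | ∃ i j : Fin 3, i ≠ j ∧ t = T.child i j}

/-- `n`-fold iterated barycentric subdivision `Bⁿ(T₀)`. -/
noncomputable def BIter (T₀ : Triangle) : ℕ → Set Triangle
  | 0 => {T₀}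
  | n + 1 => ⋃ t ∈ BIter T₀ n, BSub t

/-- The set of sides of a triangle (as subsets of the plane). -/
def Triangle.sides (T : Triangle) : Set (Set Pt) :=
  {e | ∃ i j : Fin 3, i ≠ j ∧ e = segment ℝ (T.v i) (T.v j)}

/-- The boundary of a triangle: the union of its three sides. -/
def Triangle.bdry (T : Triangle) : Set Pt :=
  segment ℝ (T.v 0) (T.v 1) ∪ segment ℝ (T.v 1) (T.v 2) ∪ segment ℝ (T.v 0) (T.v 2)

/-- Two triangles are adjacent if they are distinct and share a common side. -/
def Adjacent (s t : Triangle) : Prop := s ≠ t ∧ ∃ e, e ∈ s.sides ∧ e ∈ t.sides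

open Set AffineMap

noncomputable def hul (T : Triangle) : Set Pt := convexHull ℝ (Set.range T.v)

noncomputable def bas (T : Triangle) (hT : T.Nondeg) : AffineBasis (Fin 3) ℝ Pt :=
  ⟨T.v, hT, by rw [hT.affineSpan_eq_top_iff_card_eq_finrank_add_one]; simp⟩

lemma bas_coe (T : Triangle) (hT : T.Nondeg) : ⇑(bas T hT) = T.v := rfl

lemma coord_vertex (T : Triangle) (hT : T.Nondeg) (p r : Fin 3) :
    (bas T hT).coord p (T.v r) = if p = r then 1 else 0 := by
  have := (bas T hT).coord_apply p r
  rwa [bas_coe] at this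

/-- real-valued lineMap formula -/
lemma lineMapR (a b t : ℝ) : lineMap a b t = (1 - t) * a + t * b := by
  simp [lineMap_apply]; ring

lemma lineMapV (x y : Pt) (t : ℝ) : lineMap x y t = (1 - t) • x + t • y := by
  rw [lineMap_apply_module]

lemma child_v0 (T : Triangle) (i j : Fin 3) : (T.child i j).v 0 = T.v i := rfl
lemma child_v1 (T : Triangle) (i j : Fin 3) :
    (T.child i j).v 1 = lineMap (T.v i) (T.v j) (2⁻¹ : ℝ) := by
  show (2 : ℝ)⁻¹ • (T.v i + T.v j) = _
  rw [lineMap_apply_module]; module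
lemma child_v2 (T : Triangle) (i j : Fin 3) :
    (T.child i j).v 2 = lineMap (lineMap (T.v 0) (T.v 1) (2⁻¹ : ℝ)) (T.v 2) (3⁻¹ : ℝ) := by
  show T.bary = _
  rw [Triangle.bary, lineMap_apply_module, lineMap_apply_module]; module

def q6 (i j r p : Fin 3) : ℕ :=
  if r = 0 then (if p = i then 6 else 0)
  else if r = 1 then (if p = i then 3 else 0) + (if p = j then 3 else 0)
  else 2

lemma coord_child (T : Triangle) (hT : T.Nondeg) (i j : Fin 3) (hij : i ≠ j) (p r : Fin 3) :
    (bas T hT).coord p ((T.child i j).v r) = (q6 i j r p : ℝ) / 6 := by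
  fin_cases r <;> simp only [Fin.zero_eta, Fin.mk_one, Fin.reduceFinMk]
  · rw [child_v0, coord_vertex]
    simp only [q6]
    split_ifs <;> norm_num
  · rw [child_v1, AffineMap.apply_lineMap, coord_vertex, coord_vertex, lineMapR]
    simp only [q6]
    rcases eq_or_ne p i with rfl | hpi
    · simp [hij]; norm_num
    · rcases eq_or_ne p j with rfl | hpj
      · simp [hpi, hij.symm]; norm_num
      · simp [hpi, hpj]
  · rw [child_v2, AffineMap.apply_lineMap, AffineMap.apply_lineMap,
      coord_vertex, coord_vertex, coord_vertex, lineMapR, lineMapR]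
    simp only [q6]
    fin_cases p <;> simp only [Fin.reduceFinMk] <;> norm_num [Fin.ext_iff]

/-- Parent's affine independence, in weight form. -/
lemma parent_w (T : Triangle) (hT : T.Nondeg) (W : Fin 3 → ℝ)
    (h0 : W 0 + W 1 + W 2 = 0)
    (hv : W 0 • T.v 0 + W 1 • T.v 1 + W 2 • T.v 2 = 0) : ∀ r, W r = 0 := by
  have h := affineIndependent_iff.mp hT Finset.univ W
    (by rw [Fin.sum_univ_three]; exact h0)
    (by rw [Fin.sum_univ_three]; exact hv)
  intro r; exact h r (Finset.mem_univ r)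

lemma child_nondeg (T : Triangle) (hT : T.Nondeg) (i j : Fin 3) (hij : i ≠ j) :
    (T.child i j).Nondeg := by
  rw [Triangle.Nondeg, affineIndependent_iff_of_fintype]
  intro w hw hv
  rw [Finset.weightedVSub_eq_linear_combination _ hw, Fin.sum_univ_three] at hv
  rw [Fin.sum_univ_three] at hw
  have hv' : w 0 • T.v i + w 1 • ((2:ℝ)⁻¹ • (T.v i + T.v j)) +
      w 2 • ((3:ℝ)⁻¹ • (T.v 0 + T.v 1 + T.v 2)) = 0 := hv
  intro r
  clear hv
  fin_cases i <;> fin_cases j <;> (try exact absurd rfl hij)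
  · have h := parent_w T hT ![w 0 + w 1 / 2 + w 2 / 3, w 1 / 2 + w 2 / 3, w 2 / 3]
      (by simp only [Matrix.cons_val_zero, Matrix.cons_val_one, Matrix.head_cons,
            Matrix.cons_val_two, Matrix.tail_cons]; linarith)
      (by simp only [Matrix.cons_val_zero, Matrix.cons_val_one, Matrix.head_cons,
            Matrix.cons_val_two, Matrix.tail_cons]
          rw [show (w 0 + w 1 / 2 + w 2 / 3) • T.v 0 + (w 1 / 2 + w 2 / 3) • T.v 1 + (w 2 / 3) • T.v 2 =
            w 0 • T.v 0 + w 1 • ((2:ℝ)⁻¹ • (T.v 0 + T.v 1)) +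
            w 2 • ((3:ℝ)⁻¹ • (T.v 0 + T.v 1 + T.v 2)) from by module]
          exact hv')
    have h0 := h 0; have h1 := h 1; have h2 := h 2
    simp only [Matrix.cons_val_zero, Matrix.cons_val_one, Matrix.head_cons,
      Matrix.cons_val_two, Matrix.tail_cons] at h0 h1 h2
    fin_cases r <;> simp only [Fin.zero_eta, Fin.mk_one, Fin.reduceFinMk] <;> linarith
  · have h := parent_w T hT ![w 0 + w 1 / 2 + w 2 / 3, w 2 / 3, w 1 / 2 + w 2 / 3]
      (by simp only [Matrix.cons_val_zero, Matrix.cons_val_one, Matrix.head_cons,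
            Matrix.cons_val_two, Matrix.tail_cons]; linarith)
      (by simp only [Matrix.cons_val_zero, Matrix.cons_val_one, Matrix.head_cons,
            Matrix.cons_val_two, Matrix.tail_cons]
          rw [show (w 0 + w 1 / 2 + w 2 / 3) • T.v 0 + (w 2 / 3) • T.v 1 + (w 1 / 2 + w 2 / 3) • T.v 2 =
            w 0 • T.v 0 + w 1 • ((2:ℝ)⁻¹ • (T.v 0 + T.v 2)) +
            w 2 • ((3:ℝ)⁻¹ • (T.v 0 + T.v 1 + T.v 2)) from by module]
          exact hv')
    have h0 := h 0; have h1 := h 1; have h2 := h 2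
    simp only [Matrix.cons_val_zero, Matrix.cons_val_one, Matrix.head_cons,
      Matrix.cons_val_two, Matrix.tail_cons] at h0 h1 h2
    fin_cases r <;> simp only [Fin.zero_eta, Fin.mk_one, Fin.reduceFinMk] <;> linarith
  · have h := parent_w T hT ![w 1 / 2 + w 2 / 3, w 0 + w 1 / 2 + w 2 / 3, w 2 / 3]
      (by simp only [Matrix.cons_val_zero, Matrix.cons_val_one, Matrix.head_cons,
            Matrix.cons_val_two, Matrix.tail_cons]; linarith)
      (by simp only [Matrix.cons_val_zero, Matrix.cons_val_one, Matrix.head_cons,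
            Matrix.cons_val_two, Matrix.tail_cons]
          rw [show (w 1 / 2 + w 2 / 3) • T.v 0 + (w 0 + w 1 / 2 + w 2 / 3) • T.v 1 + (w 2 / 3) • T.v 2 =
            w 0 • T.v 1 + w 1 • ((2:ℝ)⁻¹ • (T.v 1 + T.v 0)) +
            w 2 • ((3:ℝ)⁻¹ • (T.v 0 + T.v 1 + T.v 2)) from by module]
          exact hv')
    have h0 := h 0; have h1 := h 1; have h2 := h 2
    simp only [Matrix.cons_val_zero, Matrix.cons_val_one, Matrix.head_cons,
      Matrix.cons_val_two, Matrix.tail_cons] at h0 h1 h2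
    fin_cases r <;> simp only [Fin.zero_eta, Fin.mk_one, Fin.reduceFinMk] <;> linarith
  · have h := parent_w T hT ![w 2 / 3, w 0 + w 1 / 2 + w 2 / 3, w 1 / 2 + w 2 / 3]
      (by simp only [Matrix.cons_val_zero, Matrix.cons_val_one, Matrix.head_cons,
            Matrix.cons_val_two, Matrix.tail_cons]; linarith)
      (by simp only [Matrix.cons_val_zero, Matrix.cons_val_one, Matrix.head_cons,
            Matrix.cons_val_two, Matrix.tail_cons]
          rw [show (w 2 / 3) • T.v 0 + (w 0 + w 1 / 2 + w 2 / 3) • T.v 1 + (w 1 / 2 + w 2 / 3) • T.v 2 =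
            w 0 • T.v 1 + w 1 • ((2:ℝ)⁻¹ • (T.v 1 + T.v 2)) +
            w 2 • ((3:ℝ)⁻¹ • (T.v 0 + T.v 1 + T.v 2)) from by module]
          exact hv')
    have h0 := h 0; have h1 := h 1; have h2 := h 2
    simp only [Matrix.cons_val_zero, Matrix.cons_val_one, Matrix.head_cons,
      Matrix.cons_val_two, Matrix.tail_cons] at h0 h1 h2
    fin_cases r <;> simp only [Fin.zero_eta, Fin.mk_one, Fin.reduceFinMk] <;> linarith
  · have h := parent_w T hT ![w 1 / 2 + w 2 / 3, w 2 / 3, w 0 + w 1 / 2 + w 2 / 3]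
      (by simp only [Matrix.cons_val_zero, Matrix.cons_val_one, Matrix.head_cons,
            Matrix.cons_val_two, Matrix.tail_cons]; linarith)
      (by simp only [Matrix.cons_val_zero, Matrix.cons_val_one, Matrix.head_cons,
            Matrix.cons_val_two, Matrix.tail_cons]
          rw [show (w 1 / 2 + w 2 / 3) • T.v 0 + (w 2 / 3) • T.v 1 + (w 0 + w 1 / 2 + w 2 / 3) • T.v 2 =
            w 0 • T.v 2 + w 1 • ((2:ℝ)⁻¹ • (T.v 2 + T.v 0)) +
            w 2 • ((3:ℝ)⁻¹ • (T.v 0 + T.v 1 + T.v 2)) from by module]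
          exact hv')
    have h0 := h 0; have h1 := h 1; have h2 := h 2
    simp only [Matrix.cons_val_zero, Matrix.cons_val_one, Matrix.head_cons,
      Matrix.cons_val_two, Matrix.tail_cons] at h0 h1 h2
    fin_cases r <;> simp only [Fin.zero_eta, Fin.mk_one, Fin.reduceFinMk] <;> linarith
  · have h := parent_w T hT ![w 2 / 3, w 1 / 2 + w 2 / 3, w 0 + w 1 / 2 + w 2 / 3]
      (by simp only [Matrix.cons_val_zero, Matrix.cons_val_one, Matrix.head_cons,
            Matrix.cons_val_two, Matrix.tail_cons]; linarith)
      (by simp only [Matrix.cons_val_zero, Matrix.cons_val_one, Matrix.head_cons,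
            Matrix.cons_val_two, Matrix.tail_cons]
          rw [show (w 2 / 3) • T.v 0 + (w 1 / 2 + w 2 / 3) • T.v 1 + (w 0 + w 1 / 2 + w 2 / 3) • T.v 2 =
            w 0 • T.v 2 + w 1 • ((2:ℝ)⁻¹ • (T.v 2 + T.v 1)) +
            w 2 • ((3:ℝ)⁻¹ • (T.v 0 + T.v 1 + T.v 2)) from by module]
          exact hv')
    have h0 := h 0; have h1 := h 1; have h2 := h 2
    simp only [Matrix.cons_val_zero, Matrix.cons_val_one, Matrix.head_cons,
      Matrix.cons_val_two, Matrix.tail_cons] at h0 h1 h2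
    fin_cases r <;> simp only [Fin.zero_eta, Fin.mk_one, Fin.reduceFinMk] <;> linarith

lemma vert_mem_hul (T : Triangle) (r : Fin 3) : T.v r ∈ hul T :=
  subset_convexHull ℝ _ ⟨r, rfl⟩

lemma hul_convex (T : Triangle) : Convex ℝ (hul T) := convex_convexHull ℝ _

lemma child_vert_mem (T : Triangle) (i j r : Fin 3) : (T.child i j).v r ∈ hul T := by
  fin_cases r <;> simp only [Fin.zero_eta, Fin.mk_one, Fin.reduceFinMk]
  · exact vert_mem_hul T i
  · rw [child_v1]
    rw [lineMapV]
    exact (hul_convex T) (vert_mem_hul T i) (vert_mem_hul T j) (by norm_num) (by norm_num)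
      (by norm_num)
  · rw [child_v2]
    rw [lineMapV, lineMapV]
    have hm : (1 - 2⁻¹ : ℝ) • T.v 0 + (2⁻¹:ℝ) • T.v 1 ∈ hul T :=
      (hul_convex T) (vert_mem_hul T 0) (vert_mem_hul T 1) (by norm_num) (by norm_num)
        (by norm_num)
    exact (hul_convex T) hm (vert_mem_hul T 2) (by norm_num) (by norm_num) (by norm_num)

lemma hul_child_subset (T : Triangle) (i j : Fin 3) : hul (T.child i j) ⊆ hul T := by
  apply convexHull_min _ (hul_convex T)
  rintro x ⟨r, rfl⟩
  exact child_vert_mem T i j r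

lemma side_subset_hul (T : Triangle) {e : Set Pt} (he : e ∈ T.sides) : e ⊆ hul T := by
  obtain ⟨i, j, hij, rfl⟩ := he
  exact (hul_convex T).segment_subset (vert_mem_hul T i) (vert_mem_hul T j)

lemma hul_eq_nonneg (T : Triangle) (hT : T.Nondeg) :
    hul T = {x | ∀ p, 0 ≤ (bas T hT).coord p x} := by
  have := (bas T hT).convexHull_eq_nonneg_coord
  rw [bas_coe] at this
  exact this

lemma int_hul_eq (T : Triangle) (hT : T.Nondeg) :
    interior (hul T) = {x | ∀ p, 0 < (bas T hT).coord p x} := by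
  have := (bas T hT).interior_convexHull
  rw [bas_coe] at this
  exact this

lemma coord_bary (T : Triangle) (hT : T.Nondeg) (p : Fin 3) :
    (bas T hT).coord p T.bary = 1 / 3 := by
  have h := coord_child T hT 0 1 (by decide) p 2
  rw [show (T.child 0 1).v 2 = T.bary from rfl] at h
  rw [h]; simp [q6]; norm_num

lemma bary_mem_int (T : Triangle) (hT : T.Nondeg) : T.bary ∈ interior (hul T) := by
  rw [int_hul_eq T hT]
  intro p
  rw [coord_bary T hT p]; norm_num

/-- Equal barycentric coordinates implies equal points. -/
lemma coord_inj (T : Triangle) (hT : T.Nondeg) {x y : Pt}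
    (h : ∀ p, (bas T hT).coord p x = (bas T hT).coord p y) : x = y := by
  have hx := (bas T hT).affineCombination_coord_eq_self x
  have hy := (bas T hT).affineCombination_coord_eq_self y
  rw [← hx, ← hy]
  congr 1
  funext p
  exact h p

/-- Parametrize segment membership. -/
lemma seg_param {x u v : Pt} (h : x ∈ segment ℝ u v) :
    ∃ t : ℝ, 0 ≤ t ∧ t ≤ 1 ∧ x = lineMap u v t := by
  rw [segment_eq_image_lineMap] at h
  obtain ⟨t, ht, rfl⟩ := h
  exact ⟨t, ht.1, ht.2, rfl⟩

lemma lineMap_mem_seg {u v : Pt} {t : ℝ} (h0 : 0 ≤ t) (h1 : t ≤ 1) :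
    lineMap u v t ∈ segment ℝ u v := by
  rw [segment_eq_image_lineMap]
  exact ⟨t, ⟨h0, h1⟩, rfl⟩

/-- An affine functional of the form coord p - coord q evaluated on lineMap. -/
lemma coordd_lineMap (T : Triangle) (hT : T.Nondeg) (p q : Fin 3) (u v : Pt) (t : ℝ) :
    (bas T hT).coord p (lineMap u v t) - (bas T hT).coord q (lineMap u v t) =
      (1 - t) * ((bas T hT).coord p u - (bas T hT).coord q u) +
      t * ((bas T hT).coord p v - (bas T hT).coord q v) := by
  rw [AffineMap.apply_lineMap, AffineMap.apply_lineMap, lineMapR, lineMapR]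
  ring

/-- If an affine functional vanishes at two distinct points of a segment,
it vanishes at the endpoints. -/
lemma vanish_on_seg (T : Triangle) (hT : T.Nondeg) (p q : Fin 3) {u v x y : Pt}
    (hx : x ∈ segment ℝ u v) (hy : y ∈ segment ℝ u v) (hxy : x ≠ y)
    (hfx : (bas T hT).coord p x = (bas T hT).coord q x)
    (hfy : (bas T hT).coord p y = (bas T hT).coord q y) :
    (bas T hT).coord p u = (bas T hT).coord q u ∧
    (bas T hT).coord p v = (bas T hT).coord q v := by
  obtain ⟨a, ha0, ha1, rfl⟩ := seg_param hx
  obtain ⟨b, hb0, hb1, rfl⟩ := seg_param hy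
  set fu := (bas T hT).coord p u - (bas T hT).coord q u with hfu
  set fv := (bas T hT).coord p v - (bas T hT).coord q v with hfv
  have e1 : (1 - a) * fu + a * fv = 0 := by
    rw [hfu, hfv, ← coordd_lineMap]; rw [sub_eq_zero]; exact hfx
  have e2 : (1 - b) * fu + b * fv = 0 := by
    rw [hfu, hfv, ← coordd_lineMap]; rw [sub_eq_zero]; exact hfy
  rcases eq_or_ne fu fv with hef | hef
  · constructor <;> rw [← sub_eq_zero]
    · rw [← hfu]; nlinarith [e1]
    · rw [← hfv]; nlinarith [e1, hef]
  · exfalso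
    have hab : a = b := by
      by_contra hne
      apply hef
      have : (a - b) * (fv - fu) = 0 := by nlinarith [e1, e2]
      rcases mul_eq_zero.mp this with h | h
      · exact absurd (by linarith) hne
      · linarith
    exact hxy (by rw [hab])

/-- Injectivity of lineMap for distinct endpoints. -/
lemma lineMap_inj {u v : Pt} (huv : u ≠ v) {a b : ℝ}
    (h : lineMap u v a = lineMap u v b) : a = b := by
  rw [lineMap_apply_module, lineMap_apply_module] at h
  have h2 : (a - b) • (v - u) = 0 := by
    have := sub_eq_zero.mpr h
    rw [show ((1-a)•u + a•v) - ((1-b)•u + b•v) = (a-b) • (v - u) from by module] at this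
    exact this
  rcases smul_eq_zero.mp h2 with h | h
  · linarith [h]
  · exact absurd (sub_eq_zero.mp h).symm huv

lemma lineMap_comp (u v : Pt) (t a : ℝ) :
    lineMap u (lineMap u v t) a = lineMap u v (a * t) := by
  rw [lineMap_apply_module, lineMap_apply_module, lineMap_apply_module]; module

lemma lineMap_comp' (u v : Pt) (t c : ℝ) :
    lineMap (lineMap u v t) v c = lineMap u v (t + c * (1 - t)) := by
  rw [lineMap_apply_module, lineMap_apply_module, lineMap_apply_module]; module

/-- Two consecutive segments on a line meet only at the common point. -/
lemma consec {u v : Pt} (huv : u ≠ v) {t0 : ℝ} (h0 : 0 < t0) (h1 : t0 < 1) :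
    segment ℝ u (lineMap u v t0) ∩ segment ℝ (lineMap u v t0) v ⊆ {lineMap u v t0} := by
  rintro x ⟨hx1, hx2⟩
  obtain ⟨a, ha0, ha1, hxa⟩ := seg_param hx1
  obtain ⟨c, hc0, hc1, hxc⟩ := seg_param hx2
  rw [lineMap_comp] at hxa
  rw [lineMap_comp'] at hxc
  have heq : a * t0 = t0 + c * (1 - t0) := lineMap_inj huv (by rw [← hxa, ← hxc])
  have h2 : a * t0 ≤ t0 := by nlinarith
  have h3 : t0 ≤ t0 + c * (1 - t0) := by nlinarith
  have : a * t0 = t0 := by linarith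
  rw [Set.mem_singleton_iff, hxa, this]

lemma lineMap_comp2 (u v : Pt) (s t r : ℝ) :
    lineMap (lineMap u v s) (lineMap u v t) r = lineMap u v (s + r * (t - s)) := by
  rw [lineMap_apply_module, lineMap_apply_module, lineMap_apply_module, lineMap_apply_module]
  module

/-- A segment determines its endpoints (up to order). -/
lemma seg_endpoints {a b c d : Pt} (hab : a ≠ b)
    (h : segment ℝ a b = segment ℝ c d) : (a = c ∧ b = d) ∨ (a = d ∧ b = c) := by
  have hc : c ∈ segment ℝ a b := h ▸ left_mem_segment ℝ c d
  have hd : d ∈ segment ℝ a b := h ▸ right_mem_segment ℝ c d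
  have ha : a ∈ segment ℝ c d := h ▸ left_mem_segment ℝ a b
  have hb : b ∈ segment ℝ c d := h ▸ right_mem_segment ℝ a b
  obtain ⟨s, hs0, hs1, rfl⟩ := seg_param hc
  obtain ⟨t, ht0, ht1, rfl⟩ := seg_param hd
  obtain ⟨r, hr0, hr1, har⟩ := seg_param ha
  obtain ⟨r', hr'0, hr'1, hbr⟩ := seg_param hb
  rw [lineMap_comp2] at har hbr
  have e1 : (0:ℝ) = s + r * (t - s) := by
    have := lineMap_inj hab (a := (0:ℝ)) (b := s + r * (t - s))
      (by rw [lineMap_apply_zero]; exact har)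
    linarith [this]
  have e2 : (1:ℝ) = s + r' * (t - s) := by
    have := lineMap_inj hab (a := (1:ℝ)) (b := s + r' * (t - s))
      (by rw [lineMap_apply_one]; exact hbr)
    linarith [this]
  rcases le_total s t with hst | hst
  · left
    have hs : s = 0 := by nlinarith
    have ht : t = 1 := by nlinarith
    constructor
    · rw [hs, lineMap_apply_zero]
    · rw [ht, lineMap_apply_one]
  · right
    have hs : s = 1 := by nlinarith
    have ht : t = 0 := by nlinarith
    constructor
    · rw [ht, lineMap_apply_zero]
    · rw [hs, lineMap_apply_one]

/-- If an open set is contained in `{coord q ≤ coord p}`, it lies in the strict region. -/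
lemma open_pos (T : Triangle) (hT : T.Nondeg) (p q : Fin 3) (hpq : p ≠ q) {U : Set Pt}
    (hU : IsOpen U) (hsub : ∀ z ∈ U, (bas T hT).coord q z ≤ (bas T hT).coord p z)
    {x : Pt} (hx : x ∈ U) : (bas T hT).coord q x < (bas T hT).coord p x := by
  rcases lt_or_eq_of_le (hsub x hx) with h | h
  · exact h
  exfalso
  set w := T.v q with hw
  have hfw : (bas T hT).coord p w - (bas T hT).coord q w = -1 := by
    rw [hw, coord_vertex, coord_vertex]
    simp [hpq]
  have hcont : Filter.Tendsto (fun t : ℝ => lineMap x w t) (nhdsWithin 0 (Set.Ioi 0)) (nhds x) := by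
    have h1 : Continuous (fun t : ℝ => lineMap x w t) := AffineMap.lineMap_continuous
    have h2 := h1.tendsto 0
    rw [show lineMap x w (0:ℝ) = x from lineMap_apply_zero x w] at h2
    exact h2.mono_left nhdsWithin_le_nhds
  have hev : ∀ᶠ t in nhdsWithin (0:ℝ) (Set.Ioi 0), lineMap x w t ∈ U :=
    hcont.eventually (hU.mem_nhds hx)
  obtain ⟨t, htU, ht⟩ := (hev.and self_mem_nhdsWithin).exists
  have hval : (bas T hT).coord p (lineMap x w t) - (bas T hT).coord q (lineMap x w t) = -t := by
    rw [coordd_lineMap, hfw, ← h]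
    ring
  have := hsub _ htU
  have ht' : 0 < t := ht
  linarith

/-- A point interior to one triangle's hull and inside another's hull forces
the interiors to meet. -/
lemma meet_interior {A B : Triangle} (hB : B.Nondeg) {z : Pt}
    (hzA : z ∈ interior (hul A)) (hzB : z ∈ hul B) :
    (interior (hul A) ∩ interior (hul B)).Nonempty := by
  set w := B.bary with hw
  have hwB : w ∈ interior (hul B) := bary_mem_int B hB
  have hcont : Filter.Tendsto (fun t : ℝ => lineMap z w t) (nhdsWithin 0 (Set.Ioi 0))
      (nhds z) := by
    have h1 : Continuous (fun t : ℝ => lineMap z w t) := AffineMap.lineMap_continuous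
    have h2 := h1.tendsto 0
    rw [show lineMap z w (0:ℝ) = z from lineMap_apply_zero z w] at h2
    exact h2.mono_left nhdsWithin_le_nhds
  have hev : ∀ᶠ t in nhdsWithin (0:ℝ) (Set.Ioi 0), lineMap z w t ∈ interior (hul A) :=
    hcont.eventually (isOpen_interior.mem_nhds hzA)
  have hlt : ∀ᶠ t in nhdsWithin (0:ℝ) (Set.Ioi 0), t < 1 :=
    (eventually_lt_nhds (by norm_num : (0:ℝ) < 1)).filter_mono nhdsWithin_le_nhds
  have hall := (hev.and ((eventually_mem_nhdsWithin).and hlt)).exists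
  obtain ⟨t, htA, ht0, ht1⟩ : ∃ t : ℝ, lineMap z w t ∈ interior (hul A) ∧ t ∈ Set.Ioi (0:ℝ) ∧ t < 1 := by
    obtain ⟨t, h1, h2, h3⟩ := hall
    exact ⟨t, h1, h2, h3⟩
  rw [Set.mem_Ioi] at ht0
  refine ⟨lineMap z w t, htA, ?_⟩
  have hcombo : t • w + (1 - t) • z ∈ interior (hul B) :=
    (hul_convex B).combo_interior_closure_mem_interior hwB (subset_closure hzB) ht0
      (by linarith) (by ring)
  rw [lineMap_apply_module]
  rw [add_comm] at hcombo
  exact hcombo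

lemma combo_lineMap {x y : Pt} {a b : ℝ} (hab : a + b = 1) :
    a • x + b • y = lineMap x y b := by
  rw [lineMap_apply_module]
  have : a = 1 - b := by linarith
  rw [this]

lemma convex_halfplane (T : Triangle) (hT : T.Nondeg) (p q : Fin 3) :
    Convex ℝ {x : Pt | (bas T hT).coord q x ≤ (bas T hT).coord p x} := by
  intro x hx y hy a b ha hb hab
  rw [Set.mem_setOf_eq, ← sub_nonneg] at hx hy ⊢
  rw [combo_lineMap hab, coordd_lineMap]
  have hb1 : b ≤ 1 := by linarith
  nlinarith

lemma hul_child_halfplane (T : Triangle) (hT : T.Nondeg) (i j : Fin 3) (hij : i ≠ j)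
    (p q : Fin 3) (hle : ∀ r, q6 i j r q ≤ q6 i j r p) :
    ∀ x ∈ hul (T.child i j), (bas T hT).coord q x ≤ (bas T hT).coord p x := by
  intro x hx
  have := convexHull_min (s := Set.range (T.child i j).v)
    (t := {x : Pt | (bas T hT).coord q x ≤ (bas T hT).coord p x}) ?_
    (convex_halfplane T hT p q)
  · exact this hx
  · rintro z ⟨r, rfl⟩
    rw [Set.mem_setOf_eq, coord_child T hT i j hij, coord_child T hT i j hij]
    have := hle r
    have : (q6 i j r q : ℝ) ≤ (q6 i j r p : ℝ) := by exact_mod_cast this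
    linarith

/-- Value `coord p - coord q` on a segment between child vertices stays in the
closed region, used pointwise. -/
lemma seg_halfplane (T : Triangle) (hT : T.Nondeg) {u v x : Pt}
    (p q : Fin 3) (hu : (bas T hT).coord q u ≤ (bas T hT).coord p u)
    (hv : (bas T hT).coord q v ≤ (bas T hT).coord p v)
    (hx : x ∈ segment ℝ u v) : (bas T hT).coord q x ≤ (bas T hT).coord p x := by
  obtain ⟨t, ht0, ht1, rfl⟩ := seg_param hx
  have := coordd_lineMap T hT p q u v t
  nlinarith [this]

lemma lineMap_half_comm (x y : Pt) : lineMap x y (2⁻¹:ℝ) = lineMap y x (2⁻¹:ℝ) := by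
  rw [lineMap_apply_module, lineMap_apply_module]; module

lemma lineMap_same (u : Pt) (t : ℝ) : lineMap u u t = u := by
  rw [lineMap_apply_module]; module

lemma child_side_sub_hul (T : Triangle) (k l r3 r4 : Fin 3) :
    segment ℝ ((T.child k l).v r3) ((T.child k l).v r4) ⊆ hul T :=
  (hul_convex T).segment_subset (child_vert_mem T k l r3) (child_vert_mem T k l r4)

lemma childv2_eq (T : Triangle) (i j : Fin 3) : (T.child i j).v 2 = T.bary := rfl

/-- A segment from a hull point to a point `≠` that hull point, inside a child side
containing the barycenter, meets the interior; with a second triangle's hull containing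
it, interiors intersect: contradiction with disjointness. -/
lemma typeII_kill {S T : Triangle} (hSnd : S.Nondeg) (hTnd : T.Nondeg)
    (hD : interior (hul S) ∩ interior (hul T) = ∅)
    {u : Pt} (hu : u ∈ hul S)
    {x y : Pt}
    (hx : x ∈ segment ℝ u S.bary) (hy : y ∈ segment ℝ u S.bary)
    (hxT : x ∈ hul T) (hyT : y ∈ hul T) (hxy : x ≠ y) : False := by
  have hz : ∃ z, z ∈ segment ℝ u S.bary ∧ z ≠ u ∧ z ∈ hul T := by
    rcases eq_or_ne x u with rfl | hxu
    · exact ⟨y, hy, fun h => hxy h.symm, hyT⟩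
    · exact ⟨x, hx, hxu, hxT⟩
  obtain ⟨z, hzseg, hzu, hzT⟩ := hz
  have hune : u ≠ S.bary := by
    rintro rfl
    rw [segment_same] at hzseg
    exact hzu hzseg
  obtain ⟨c, hc0, hc1, rfl⟩ := seg_param hzseg
  have hcne : c ≠ 0 := by
    rintro rfl
    rw [lineMap_apply_zero] at hzu
    exact hzu rfl
  have hcpos : 0 < c := lt_of_le_of_ne hc0 (Ne.symm hcne)
  have hint : lineMap u S.bary c ∈ interior (hul S) := by
    have := (hul_convex S).combo_interior_closure_mem_interior (bary_mem_int S hSnd)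
      (subset_closure hu) hcpos (by linarith : (0:ℝ) ≤ 1 - c) (by ring)
    rw [lineMap_apply_module, add_comm]
    exact this
  obtain ⟨w, hw1, hw2⟩ := meet_interior hTnd hint hzT
  rw [Set.eq_empty_iff_forall_notMem] at hD
  exact hD w ⟨hw1, hw2⟩

theorem DEC1 : ∀ i j k l : Fin 3, i ≠ j → k ≠ l → (i, j) ≠ (k, l) →
    ∃ p q : Fin 3, p ≠ q ∧ (∀ r, q6 i j r q ≤ q6 i j r p) ∧ (∀ r, q6 k l r p ≤ q6 k l r q) := by
  decide

set_option synthInstance.maxSize 2000 in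
set_option synthInstance.maxHeartbeats 2000000 in
set_option maxHeartbeats 4000000 in
theorem DEC2 : ∀ i j k l p q r1 r2 r3 r4 : Fin 3, i ≠ j → k ≠ l → (i, j) ≠ (k, l) → p ≠ q →
    (∀ r, q6 i j r q ≤ q6 i j r p) → (∀ r, q6 k l r p ≤ q6 k l r q) →
    r1 ≠ r2 → r3 ≠ r4 →
    q6 i j r1 p = q6 i j r1 q → q6 i j r2 p = q6 i j r2 q →
    q6 k l r3 p = q6 k l r3 q → q6 k l r4 p = q6 k l r4 q →
    (r1 = 2 ∨ r2 = 2) ∧ (r3 = 2 ∨ r4 = 2) ∧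
      ((∀ p', q6 i j (if r1 = 2 then r2 else r1) p' = q6 k l (if r3 = 2 then r4 else r3) p') ∨
       (∀ p', 3 * q6 i j 2 p' =
          2 * q6 i j (if r1 = 2 then r2 else r1) p' + q6 k l (if r3 = 2 then r4 else r3) p') ∨
       (∀ p', 3 * q6 i j 2 p' =
          q6 i j (if r1 = 2 then r2 else r1) p' + 2 * q6 k l (if r3 = 2 then r4 else r3) p')) := by
  decide

theorem master (T₀ : Triangle) (hT₀ : T₀.Nondeg) : ∀ n : ℕ,
    (∀ U ∈ BIter T₀ n, U.Nondeg) ∧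
    (∀ S ∈ BIter T₀ n, ∀ T ∈ BIter T₀ n, S ≠ T →
      (interior (hul S) ∩ interior (hul T) = ∅) ∧
      (∀ σ ∈ S.sides, ∀ τ ∈ T.sides, ¬ (σ ∩ τ).Subsingleton → σ = τ)) := by
  intro n
  induction n with
  | zero =>
    constructor
    · intro U hU
      rw [BIter, Set.mem_singleton_iff] at hU
      subst hU; exact hT₀
    · intro S hS T hT hne
      rw [BIter, Set.mem_singleton_iff] at hS hT
      exact absurd (hS.trans hT.symm) hne
  | succ n ih =>
    obtain ⟨ihN, ihDE⟩ := ih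
    have memsucc : ∀ U, U ∈ BIter T₀ (n+1) ↔ ∃ P ∈ BIter T₀ n, U ∈ BSub P := by
      intro U; rw [BIter]; simp
    constructor
    · intro U hU
      obtain ⟨P, hP, i, j, hij, rfl⟩ := (memsucc U).mp hU
      exact child_nondeg P (ihN P hP) i j hij
    intro s hs t ht hst
    obtain ⟨S, hS, i, j, hij, hsc⟩ := (memsucc s).mp hs
    obtain ⟨T, hT, k, l, hkl, htc⟩ := (memsucc t).mp ht
    subst hsc htc
    have hSnd := ihN S hS
    have hTnd := ihN T hT
    constructor
    · -- D part: disjoint interiors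
      rw [Set.eq_empty_iff_forall_notMem]
      rintro x ⟨hx1, hx2⟩
      rcases eq_or_ne S T with rfl | hST
      · have hijkl : (i, j) ≠ (k, l) := by
          rintro h
          injection h with h1 h2
          exact hst (by rw [h1, h2])
        obtain ⟨p, q, hpq, hle1, hle2⟩ := DEC1 i j k l hij hkl hijkl
        have h1 : (bas S hSnd).coord q x < (bas S hSnd).coord p x :=
          open_pos S hSnd p q hpq isOpen_interior
            (fun z hz => hul_child_halfplane S hSnd i j hij p q hle1 z (interior_subset hz)) hx1
        have h2 : (bas S hSnd).coord p x < (bas S hSnd).coord q x :=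
          open_pos S hSnd q p hpq.symm isOpen_interior
            (fun z hz => hul_child_halfplane S hSnd k l hkl q p hle2 z (interior_subset hz)) hx2
        linarith
      · have hxS : x ∈ interior (hul S) := interior_mono (hul_child_subset S i j) hx1
        have hxT : x ∈ interior (hul T) := interior_mono (hul_child_subset T k l) hx2
        have hD := (ihDE S hS T hT hST).1
        rw [Set.eq_empty_iff_forall_notMem] at hD
        exact hD x ⟨hxS, hxT⟩
    · -- E part
      intro σ hσ τ hτ hnss
      obtain ⟨r1, r2, hr12, hσeq⟩ := hσ
      obtain ⟨r3, r4, hr34, hτeq⟩ := hτ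
      subst hσeq hτeq
      rw [Set.not_subsingleton_iff] at hnss
      obtain ⟨x, hx, y, hy, hxy⟩ := hnss
      obtain ⟨hxσ, hxτ⟩ := hx
      obtain ⟨hyσ, hyτ⟩ := hy
      rcases eq_or_ne S T with rfl | hST
      · -- same parent: local edge-to-edge
        have hijkl : (i, j) ≠ (k, l) := by
          rintro h
          injection h with h1 h2
          exact hst (by rw [h1, h2])
        obtain ⟨p, q, hpq, hle1, hle2⟩ := DEC1 i j k l hij hkl hijkl
        have hvs : ∀ r, (bas S hSnd).coord q ((S.child i j).v r) ≤
            (bas S hSnd).coord p ((S.child i j).v r) := by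
          intro r
          rw [coord_child S hSnd i j hij, coord_child S hSnd i j hij]
          have h' : (q6 i j r q : ℝ) ≤ q6 i j r p := by exact_mod_cast hle1 r
          linarith
        have hvt : ∀ r, (bas S hSnd).coord p ((S.child k l).v r) ≤
            (bas S hSnd).coord q ((S.child k l).v r) := by
          intro r
          rw [coord_child S hSnd k l hkl, coord_child S hSnd k l hkl]
          have h' : (q6 k l r p : ℝ) ≤ q6 k l r q := by exact_mod_cast hle2 r
          linarith
        have hfx : (bas S hSnd).coord p x = (bas S hSnd).coord q x :=
          le_antisymm (seg_halfplane S hSnd q p (hvt r3) (hvt r4) hxτ)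
            (seg_halfplane S hSnd p q (hvs r1) (hvs r2) hxσ)
        have hfy : (bas S hSnd).coord p y = (bas S hSnd).coord q y :=
          le_antisymm (seg_halfplane S hSnd q p (hvt r3) (hvt r4) hyτ)
            (seg_halfplane S hSnd p q (hvs r1) (hvs r2) hyσ)
        obtain ⟨hv1, hv2⟩ := vanish_on_seg S hSnd p q hxσ hyσ hxy hfx hfy
        obtain ⟨hv3, hv4⟩ := vanish_on_seg S hSnd p q hxτ hyτ hxy hfx hfy
        have toNat : ∀ (a b : Fin 3) (hab : a ≠ b) (r : Fin 3),
            (bas S hSnd).coord p ((S.child a b).v r) = (bas S hSnd).coord q ((S.child a b).v r) →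
            q6 a b r p = q6 a b r q := by
          intro a b hab r h
          rw [coord_child S hSnd a b hab, coord_child S hSnd a b hab] at h
          have : (q6 a b r p : ℝ) = q6 a b r q := by
            field_simp at h
            exact_mod_cast h
          exact_mod_cast this
        have q1 := toNat i j hij r1 hv1
        have q2 := toNat i j hij r2 hv2
        have q3 := toNat k l hkl r3 hv3
        have q4 := toNat k l hkl r4 hv4
        obtain ⟨h2a, h2b, hdisj⟩ :=
          DEC2 i j k l p q r1 r2 r3 r4 hij hkl hijkl hpq hle1 hle2 hr12 hr34 q1 q2 q3 q4
        have hσn : segment ℝ ((S.child i j).v r1) ((S.child i j).v r2) =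
            segment ℝ ((S.child i j).v (if r1 = 2 then r2 else r1)) S.bary := by
          rcases eq_or_ne r1 2 with h | h
          · rw [if_pos h, h, childv2_eq, segment_symm]
          · have h2 : r2 = 2 := h2a.resolve_left h
            rw [if_neg h, h2, childv2_eq]
        have hτn : segment ℝ ((S.child k l).v r3) ((S.child k l).v r4) =
            segment ℝ ((S.child k l).v (if r3 = 2 then r4 else r3)) S.bary := by
          rcases eq_or_ne r3 2 with h | h
          · rw [if_pos h, h, childv2_eq, segment_symm]
          · have h2 : r4 = 2 := h2b.resolve_left h
            rw [if_neg h, h2, childv2_eq]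
        set ru := if r1 = 2 then r2 else r1 with hru
        set rw4 := if r3 = 2 then r4 else r3 with hrw4
        set U := (S.child i j).v ru with hU
        set W := (S.child k l).v rw4 with hW
        rw [hσn] at hxσ hyσ
        rw [hτn] at hxτ hyτ
        rw [hσn, hτn]
        rcases hdisj with hA | hB | hC
        · have hUW : U = W := by
            apply coord_inj S hSnd
            intro p'
            rw [hU, hW, coord_child S hSnd i j hij, coord_child S hSnd k l hkl, hA p']
          rw [hUW]
        · exfalso
          have hBW : S.bary = lineMap U W (3⁻¹ : ℝ) := by
            apply coord_inj S hSnd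
            intro p'
            rw [AffineMap.apply_lineMap, lineMapR, hU, hW, coord_child S hSnd i j hij,
              coord_child S hSnd k l hkl, coord_bary S hSnd]
            have h6 : (3:ℝ) * 2 = 2 * (q6 i j ru p' : ℝ) + (q6 k l rw4 p') := by
              have hq2 : q6 i j 2 p' = 2 := rfl
              have := hB p'
              rw [hq2] at this
              exact_mod_cast this
            linarith
          rcases eq_or_ne U W with hUW | hUW
          · have hBU : S.bary = W := by rw [hBW, hUW, lineMap_same]
            rw [hUW, hBU, segment_same] at hxσ hyσ
            exact hxy ((Set.eq_of_mem_singleton hxσ).trans (Set.eq_of_mem_singleton hyσ).symm)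
          · have hcons := consec hUW (show (0:ℝ) < 3⁻¹ by norm_num) (by norm_num)
            have hxm : x ∈ ({lineMap U W (3⁻¹:ℝ)} : Set Pt) := by
              apply hcons
              constructor
              · rw [← hBW]; exact hxσ
              · rw [← hBW, segment_symm]; exact hxτ
            have hym : y ∈ ({lineMap U W (3⁻¹:ℝ)} : Set Pt) := by
              apply hcons
              constructor
              · rw [← hBW]; exact hyσ
              · rw [← hBW, segment_symm]; exact hyτ
            exact hxy ((Set.eq_of_mem_singleton hxm).trans (Set.eq_of_mem_singleton hym).symm)
        · exfalso
          have hBW : S.bary = lineMap U W ((2:ℝ)/3) := by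
            apply coord_inj S hSnd
            intro p'
            rw [AffineMap.apply_lineMap, lineMapR, hU, hW, coord_child S hSnd i j hij,
              coord_child S hSnd k l hkl, coord_bary S hSnd]
            have h6 : (3:ℝ) * 2 = (q6 i j ru p' : ℝ) + 2 * (q6 k l rw4 p') := by
              have hq2 : q6 i j 2 p' = 2 := rfl
              have := hC p'
              rw [hq2] at this
              exact_mod_cast this
            linarith
          rcases eq_or_ne U W with hUW | hUW
          · have hBU : S.bary = W := by rw [hBW, hUW, lineMap_same]
            rw [hUW, hBU, segment_same] at hxσ hyσ
            exact hxy ((Set.eq_of_mem_singleton hxσ).trans (Set.eq_of_mem_singleton hyσ).symm)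
          · have hcons := consec hUW (show (0:ℝ) < 2/3 by norm_num) (by norm_num)
            have hxm : x ∈ ({lineMap U W ((2:ℝ)/3)} : Set Pt) := by
              apply hcons
              constructor
              · rw [← hBW]; exact hxσ
              · rw [← hBW, segment_symm]; exact hxτ
            have hym : y ∈ ({lineMap U W ((2:ℝ)/3)} : Set Pt) := by
              apply hcons
              constructor
              · rw [← hBW]; exact hyσ
              · rw [← hBW, segment_symm]; exact hyτ
            exact hxy ((Set.eq_of_mem_singleton hxm).trans (Set.eq_of_mem_singleton hym).symm)
      · -- distinct parents
        have hD := (ihDE S hS T hT hST).1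
        have hDsym := (ihDE T hT S hS hST.symm).1
        by_cases h2s : r1 = 2 ∨ r2 = 2
        · exfalso
          have hex : ∃ u, u ∈ hul S ∧ segment ℝ ((S.child i j).v r1) ((S.child i j).v r2) =
              segment ℝ u S.bary := by
            rcases h2s with h | h
            · exact ⟨(S.child i j).v r2, child_vert_mem S i j r2, by
                rw [h, childv2_eq, segment_symm]⟩
            · exact ⟨(S.child i j).v r1, child_vert_mem S i j r1, by rw [h, childv2_eq]⟩
          obtain ⟨u, hu, hσn⟩ := hex
          rw [hσn] at hxσ hyσ
          exact typeII_kill hSnd hTnd hD hu hxσ hyσ (child_side_sub_hul T k l r3 r4 hxτ)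
            (child_side_sub_hul T k l r3 r4 hyτ) hxy
        by_cases h2t : r3 = 2 ∨ r4 = 2
        · exfalso
          have hex : ∃ u, u ∈ hul T ∧ segment ℝ ((T.child k l).v r3) ((T.child k l).v r4) =
              segment ℝ u T.bary := by
            rcases h2t with h | h
            · exact ⟨(T.child k l).v r4, child_vert_mem T k l r4, by
                rw [h, childv2_eq, segment_symm]⟩
            · exact ⟨(T.child k l).v r3, child_vert_mem T k l r3, by rw [h, childv2_eq]⟩
          obtain ⟨u, hu, hτn⟩ := hex
          rw [hτn] at hxτ hyτ
          exact typeII_kill hTnd hSnd hDsym hu hxτ hyτ (child_side_sub_hul S i j r1 r2 hxσ)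
            (child_side_sub_hul S i j r1 r2 hyσ) hxy
        push_neg at h2s h2t
        obtain ⟨hn1, hn2⟩ := h2s
        obtain ⟨hn3, hn4⟩ := h2t
        have hσ01 : segment ℝ ((S.child i j).v r1) ((S.child i j).v r2) =
            segment ℝ ((S.child i j).v 0) ((S.child i j).v 1) := by
          have : (r1 = 0 ∧ r2 = 1) ∨ (r1 = 1 ∧ r2 = 0) := by
            fin_cases r1 <;> fin_cases r2 <;> simp_all
          rcases this with ⟨ha, hb⟩ | ⟨ha, hb⟩
          · rw [ha, hb]
          · rw [ha, hb, segment_symm]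
        have hτ01 : segment ℝ ((T.child k l).v r3) ((T.child k l).v r4) =
            segment ℝ ((T.child k l).v 0) ((T.child k l).v 1) := by
          have : (r3 = 0 ∧ r4 = 1) ∨ (r3 = 1 ∧ r4 = 0) := by
            fin_cases r3 <;> fin_cases r4 <;> simp_all
          rcases this with ⟨ha, hb⟩ | ⟨ha, hb⟩
          · rw [ha, hb]
          · rw [ha, hb, segment_symm]
        rw [hσ01] at hxσ hyσ
        rw [hτ01] at hxτ hyτ
        rw [hσ01, hτ01]
        have hσsub : segment ℝ ((S.child i j).v 0) ((S.child i j).v 1) ⊆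
            segment ℝ (S.v i) (S.v j) := by
          apply (convex_segment _ _).segment_subset
          · rw [child_v0]; exact left_mem_segment ℝ _ _
          · rw [child_v1]; exact lineMap_mem_seg (by norm_num) (by norm_num)
        have hτsub : segment ℝ ((T.child k l).v 0) ((T.child k l).v 1) ⊆
            segment ℝ (T.v k) (T.v l) := by
          apply (convex_segment _ _).segment_subset
          · rw [child_v0]; exact left_mem_segment ℝ _ _
          · rw [child_v1]; exact lineMap_mem_seg (by norm_num) (by norm_num)
        have hE := (ihDE S hS T hT hST).2 (segment ℝ (S.v i) (S.v j)) ⟨i, j, hij, rfl⟩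
          (segment ℝ (T.v k) (T.v l)) ⟨k, l, hkl, rfl⟩ (by
            rw [Set.not_subsingleton_iff]
            exact ⟨x, ⟨hσsub hxσ, hτsub hxτ⟩, y, ⟨hσsub hyσ, hτsub hyτ⟩, hxy⟩)
        have hvij : S.v i ≠ S.v j := hSnd.injective.ne hij
        rcases seg_endpoints hvij hE with ⟨ha, hb⟩ | ⟨ha, hb⟩
        · rw [child_v0, child_v0, child_v1, child_v1, ha, hb]
        · exfalso
          have hM : lineMap (T.v k) (T.v l) (2⁻¹:ℝ) = lineMap (S.v i) (S.v j) (2⁻¹:ℝ) := by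
            rw [← ha, ← hb, lineMap_half_comm]
          rw [child_v0, child_v1] at hxσ hyσ hxτ hyτ
          rw [hM, ← hb] at hxτ hyτ
          have hcons := consec hvij (show (0:ℝ) < 2⁻¹ by norm_num) (by norm_num)
          have hxm : x ∈ ({lineMap (S.v i) (S.v j) (2⁻¹:ℝ)} : Set Pt) := by
            apply hcons
            exact ⟨hxσ, by rw [segment_symm]; exact hxτ⟩
          have hym : y ∈ ({lineMap (S.v i) (S.v j) (2⁻¹:ℝ)} : Set Pt) := by
            apply hcons
            exact ⟨hyσ, by rw [segment_symm]; exact hyτ⟩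
          exact hxy ((Set.eq_of_mem_singleton hxm).trans (Set.eq_of_mem_singleton hym).symm)


/-- if children `s ∈ B(S)`, `t ∈ B(T)` of triangles `S, T ∈ Bⁿ(T₀)` are
adjacent, then either `S = T` or `S` and `T` are adjacent. -/
theorem stmt2 (T₀ : Triangle) (hT₀ : T₀.Nondeg) (n : ℕ)
    (S T : Triangle) (hS : S ∈ BIter T₀ n) (hT : T ∈ BIter T₀ n)
    (s t : Triangle) (hs : s ∈ BSub S) (ht : t ∈ BSub T)
    (hadj : Adjacent s t) :
    S = T ∨ Adjacent S T := by
  rcases eq_or_ne S T with rfl | hST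
  · exact Or.inl rfl
  right
  obtain ⟨hN, hDE⟩ := master T₀ hT₀ n
  have hSnd := hN S hS
  have hTnd := hN T hT
  obtain ⟨hstne, e, heS, heT⟩ := hadj
  obtain ⟨i, j, hij, rfl⟩ := hs
  obtain ⟨k, l, hkl, rfl⟩ := ht
  obtain ⟨r1, r2, hr12, rfl⟩ := heS
  obtain ⟨r3, r4, hr34, hτeq⟩ := heT
  have hD := (hDE S hS T hT hST).1
  have hDsym := (hDE T hT S hS hST.symm).1
  have hchild := child_nondeg S hSnd i j hij
  have hxy : (S.child i j).v r1 ≠ (S.child i j).v r2 := hchild.injective.ne hr12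
  have hx : (S.child i j).v r1 ∈ segment ℝ ((S.child i j).v r1) ((S.child i j).v r2) :=
    left_mem_segment ℝ _ _
  have hy : (S.child i j).v r2 ∈ segment ℝ ((S.child i j).v r1) ((S.child i j).v r2) :=
    right_mem_segment ℝ _ _
  have hxτ : (S.child i j).v r1 ∈ segment ℝ ((T.child k l).v r3) ((T.child k l).v r4) := by
    rw [← hτeq]; exact hx
  have hyτ : (S.child i j).v r2 ∈ segment ℝ ((T.child k l).v r3) ((T.child k l).v r4) := by
    rw [← hτeq]; exact hy
  by_cases h2s : r1 = 2 ∨ r2 = 2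
  · exfalso
    have hex : ∃ u, u ∈ hul S ∧ segment ℝ ((S.child i j).v r1) ((S.child i j).v r2) =
        segment ℝ u S.bary := by
      rcases h2s with h | h
      · exact ⟨(S.child i j).v r2, child_vert_mem S i j r2, by rw [h, childv2_eq, segment_symm]⟩
      · exact ⟨(S.child i j).v r1, child_vert_mem S i j r1, by rw [h, childv2_eq]⟩
    obtain ⟨u, hu, hσn⟩ := hex
    exact typeII_kill hSnd hTnd hD hu (hσn ▸ hx) (hσn ▸ hy)
      (child_side_sub_hul T k l r3 r4 hxτ) (child_side_sub_hul T k l r3 r4 hyτ) hxy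
  by_cases h2t : r3 = 2 ∨ r4 = 2
  · exfalso
    have hex : ∃ u, u ∈ hul T ∧ segment ℝ ((T.child k l).v r3) ((T.child k l).v r4) =
        segment ℝ u T.bary := by
      rcases h2t with h | h
      · exact ⟨(T.child k l).v r4, child_vert_mem T k l r4, by rw [h, childv2_eq, segment_symm]⟩
      · exact ⟨(T.child k l).v r3, child_vert_mem T k l r3, by rw [h, childv2_eq]⟩
    obtain ⟨u, hu, hτn⟩ := hex
    exact typeII_kill hTnd hSnd hDsym hu (hτn ▸ hxτ) (hτn ▸ hyτ)
      (child_side_sub_hul S i j r1 r2 hx) (child_side_sub_hul S i j r1 r2 hy) hxy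
  push_neg at h2s h2t
  obtain ⟨hn1, hn2⟩ := h2s
  obtain ⟨hn3, hn4⟩ := h2t
  have hσ01 : segment ℝ ((S.child i j).v r1) ((S.child i j).v r2) =
      segment ℝ ((S.child i j).v 0) ((S.child i j).v 1) := by
    have : (r1 = 0 ∧ r2 = 1) ∨ (r1 = 1 ∧ r2 = 0) := by
      fin_cases r1 <;> fin_cases r2 <;> simp_all
    rcases this with ⟨ha, hb⟩ | ⟨ha, hb⟩
    · rw [ha, hb]
    · rw [ha, hb, segment_symm]
  have hτ01 : segment ℝ ((T.child k l).v r3) ((T.child k l).v r4) =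
      segment ℝ ((T.child k l).v 0) ((T.child k l).v 1) := by
    have : (r3 = 0 ∧ r4 = 1) ∨ (r3 = 1 ∧ r4 = 0) := by
      fin_cases r3 <;> fin_cases r4 <;> simp_all
    rcases this with ⟨ha, hb⟩ | ⟨ha, hb⟩
    · rw [ha, hb]
    · rw [ha, hb, segment_symm]
  have hσsub : segment ℝ ((S.child i j).v 0) ((S.child i j).v 1) ⊆
      segment ℝ (S.v i) (S.v j) := by
    apply (convex_segment _ _).segment_subset
    · rw [child_v0]; exact left_mem_segment ℝ _ _
    · rw [child_v1]; exact lineMap_mem_seg (by norm_num) (by norm_num)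
  have hτsub : segment ℝ ((T.child k l).v 0) ((T.child k l).v 1) ⊆
      segment ℝ (T.v k) (T.v l) := by
    apply (convex_segment _ _).segment_subset
    · rw [child_v0]; exact left_mem_segment ℝ _ _
    · rw [child_v1]; exact lineMap_mem_seg (by norm_num) (by norm_num)
  have hE := (hDE S hS T hT hST).2 (segment ℝ (S.v i) (S.v j)) ⟨i, j, hij, rfl⟩
    (segment ℝ (T.v k) (T.v l)) ⟨k, l, hkl, rfl⟩ (by
      rw [Set.not_subsingleton_iff]
      refine ⟨(S.child i j).v r1, ⟨hσsub (hσ01 ▸ hx), hτsub (hτ01 ▸ hxτ)⟩,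
        (S.child i j).v r2, ⟨hσsub (hσ01 ▸ hy), hτsub (hτ01 ▸ hyτ)⟩, hxy⟩)
  exact ⟨hST, segment ℝ (S.v i) (S.v j), ⟨i, j, hij, rfl⟩, by rw [hE]; exact ⟨k, l, hkl, rfl⟩⟩
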